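/- Let a, b > 0 and define sequences by a₀ = a, b₀ = b, a_{n+1} = (a_n + b_n)/2, b_{n+1} = √(a_n b_n). Then both sequences converge to a common positive limit M = AGM(a,b), and π/(2M) = G(a,b). -/

import Mathlib

open MeasureTheory Filter Set Real Topology

/-!
Gauss's argument. The integral `G(a, b)` is invariant under `(a, b) ↦ ((a + b) / 2, √(ab))`:
the substitution `t = b tan θ` turns it into `∫₀^∞ dt / √((t² + a²)(t² + b²))`, and Landen's
substitution `u = (t - ab / t) / 2`, a bijection from `(0, ∞)` onto `ℝ`, turns the integral over
`ℝ` of the new pair, which by evenness is twice its integral over `(0, ∞)`, into twice the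
integral of the old pair. Since `G(a, b)` lies between `π / (2 max a b)` and `π / (2 min a b)`,
the constant sequence `G(Aₙ, Bₙ)` tends to `π / (2M)` once both means converge to `M`, which is
Mathlib's `NNReal.agm`.
-/

noncomputable def agmIntegral (a b : ℝ) : ℝ :=
  ∫ θ in (0:ℝ)..(π / 2), 1 / √(a ^ 2 * cos θ ^ 2 + b ^ 2 * sin θ ^ 2)

lemma min_le_sqrt_sq_mul_cos_sq_add (a b θ : ℝ) (ha : 0 ≤ a) (hb : 0 ≤ b) :
    min a b ≤ √(a ^ 2 * cos θ ^ 2 + b ^ 2 * sin θ ^ 2) := by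
  have hma : min a b ^ 2 ≤ a ^ 2 := pow_le_pow_left₀ (le_min ha hb) (min_le_left a b) 2
  have hmb : min a b ^ 2 ≤ b ^ 2 := pow_le_pow_left₀ (le_min ha hb) (min_le_right a b) 2
  refine Real.le_sqrt_of_sq_le ?_
  nlinarith [sin_sq_add_cos_sq θ, sq_nonneg (sin θ), sq_nonneg (cos θ)]

lemma sqrt_sq_mul_cos_sq_add_le_max (a b θ : ℝ) (ha : 0 ≤ a) (hb : 0 ≤ b) :
    √(a ^ 2 * cos θ ^ 2 + b ^ 2 * sin θ ^ 2) ≤ max a b := by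
  have hma : a ^ 2 ≤ max a b ^ 2 := pow_le_pow_left₀ ha (le_max_left a b) 2
  have hmb : b ^ 2 ≤ max a b ^ 2 := pow_le_pow_left₀ hb (le_max_right a b) 2
  refine Real.sqrt_le_iff.2 ⟨ha.trans (le_max_left a b), ?_⟩
  nlinarith [sin_sq_add_cos_sq θ, sq_nonneg (sin θ), sq_nonneg (cos θ)]

lemma continuous_agmIntegrand {a b : ℝ} (ha : 0 < a) (hb : 0 < b) :
    Continuous fun θ ↦ 1 / √(a ^ 2 * cos θ ^ 2 + b ^ 2 * sin θ ^ 2) :=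
  continuous_const.div (by fun_prop) fun θ ↦
    ((lt_min ha hb).trans_le (min_le_sqrt_sq_mul_cos_sq_add a b θ ha.le hb.le)).ne'

lemma agmIntegral_mem_Icc {a b : ℝ} (ha : 0 < a) (hb : 0 < b) :
    agmIntegral a b ∈ Icc (π / (2 * max a b)) (π / (2 * min a b)) := by
  have hmin : 0 < min a b := lt_min ha hb
  have hpi : 0 ≤ π / 2 := by positivity
  have hint := (continuous_agmIntegrand ha hb).intervalIntegrable (μ := volume) 0 (π / 2)
  have hconst (c : ℝ) : π / (2 * c) = ∫ _ in (0:ℝ)..(π / 2), 1 / c := by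
    simp only [intervalIntegral.integral_const, sub_zero, smul_eq_mul]; ring
  constructor
  · rw [hconst]
    refine intervalIntegral.integral_mono_on hpi intervalIntegrable_const hint fun θ _ ↦ ?_
    exact one_div_le_one_div_of_le
      (hmin.trans_le (min_le_sqrt_sq_mul_cos_sq_add a b θ ha.le hb.le))
      (sqrt_sq_mul_cos_sq_add_le_max a b θ ha.le hb.le)
  · rw [hconst]
    refine intervalIntegral.integral_mono_on hpi hint intervalIntegrable_const fun θ _ ↦ ?_
    exact one_div_le_one_div_of_le hmin (min_le_sqrt_sq_mul_cos_sq_add a b θ ha.le hb.le)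

lemma tendsto_agmIntegral {ι : Type*} {l : Filter ι} {x y : ι → ℝ} {M : ℝ}
    (hx : Tendsto x l (𝓝 M)) (hy : Tendsto y l (𝓝 M)) (hM : 0 < M) :
    Tendsto (fun i ↦ agmIntegral (x i) (y i)) l (𝓝 (π / (2 * M))) := by
  have hpos : ∀ᶠ i in l, 0 < x i ∧ 0 < y i :=
    (hx.eventually (lt_mem_nhds hM)).and (hy.eventually (lt_mem_nhds hM))
  have hlim {z : ι → ℝ} (hz : Tendsto z l (𝓝 M)) :
      Tendsto (fun i ↦ π / (2 * z i)) l (𝓝 (π / (2 * M))) :=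
    tendsto_const_nhds.div (hz.const_mul 2) (by positivity)
  refine tendsto_of_tendsto_of_tendsto_of_le_of_le' (hlim (by simpa using hx.max hy))
    (hlim (by simpa using hx.min hy)) ?_ ?_
  · filter_upwards [hpos] with i ⟨hxi, hyi⟩ using (agmIntegral_mem_Icc hxi hyi).1
  · filter_upwards [hpos] with i ⟨hxi, hyi⟩ using (agmIntegral_mem_Icc hxi hyi).2

noncomputable def agmIntegralIoi (a b : ℝ) : ℝ :=
  ∫ t in Ioi 0, (√((t ^ 2 + a ^ 2) * (t ^ 2 + b ^ 2)))⁻¹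

lemma image_mul_tan_Ioo {b : ℝ} (hb : 0 < b) : (b * tan ·) '' Ioo 0 (π / 2) = Ioi 0 := by
  ext y
  constructor
  · rintro ⟨θ, ⟨h0, h1⟩, rfl⟩
    exact mul_pos hb (tan_pos_of_pos_of_lt_pi_div_two h0 h1)
  · intro hy
    refine ⟨arctan (y / b), ⟨?_, arctan_lt_pi_div_two _⟩, ?_⟩
    · simpa using arctan_strictMono (div_pos (mem_Ioi.1 hy) hb)
    · simp only [tan_arctan]; field_simp

lemma agmIntegral_eq_agmIntegralIoi (a : ℝ) {b : ℝ} (hb : 0 < b) :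
    agmIntegral a b = agmIntegralIoi a b := by
  have hsub : Ioo 0 (π / 2) ⊆ Ioo (-(π / 2)) (π / 2) := fun x hx ↦
    ⟨by linarith [hx.1, pi_pos], hx.2⟩
  have hinj : InjOn (b * tan ·) (Ioo 0 (π / 2)) := fun x hx y hy hxy ↦
    injOn_tan (hsub hx) (hsub hy) (mul_left_cancel₀ hb.ne' hxy)
  have hderiv : ∀ θ ∈ Ioo 0 (π / 2),
      HasDerivWithinAt (b * tan ·) (b / cos θ ^ 2) (Ioo 0 (π / 2)) θ := fun θ hθ ↦ by
    simpa [div_eq_mul_inv] using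
      ((hasDerivAt_tan (cos_pos_of_mem_Ioo (hsub hθ)).ne').const_mul b).hasDerivWithinAt
  have hcov := integral_image_eq_integral_abs_deriv_smul measurableSet_Ioo hderiv hinj
    fun t ↦ (√((t ^ 2 + a ^ 2) * (t ^ 2 + b ^ 2)))⁻¹
  rw [image_mul_tan_Ioo hb] at hcov
  rw [agmIntegral, agmIntegralIoi, hcov, intervalIntegral.integral_of_le (by positivity),
    integral_Ioc_eq_integral_Ioo]
  refine setIntegral_congr_fun measurableSet_Ioo fun θ hθ ↦ ?_
  have hcos : 0 < cos θ := cos_pos_of_mem_Ioo (hsub hθ)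
  have hX : 0 < b / cos θ ^ 2 := by positivity
  have hform : ((b * tan θ) ^ 2 + a ^ 2) * ((b * tan θ) ^ 2 + b ^ 2)
      = (b / cos θ ^ 2) ^ 2 * (a ^ 2 * cos θ ^ 2 + b ^ 2 * sin θ ^ 2) := by
    rw [tan_eq_sin_div_cos]
    field_simp
    linear_combination (b ^ 2 * sin θ ^ 2 + a ^ 2 * cos θ ^ 2) * sin_sq_add_cos_sq θ
  simp only [hform, smul_eq_mul, abs_of_pos hX, sqrt_mul (sq_nonneg _), sqrt_sq hX.le, mul_inv,
    ← mul_assoc, mul_inv_cancel₀ hX.ne', one_mul, one_div]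

lemma image_half_sub_div_Ioi {c : ℝ} (hc : 0 < c) :
    (fun t ↦ (t - c / t) / 2) '' Ioi 0 = univ := by
  refine eq_univ_of_forall fun u ↦ ?_
  have habs : |u| < √(u ^ 2 + c) := by
    rw [← sqrt_sq_eq_abs]; exact sqrt_lt_sqrt (sq_nonneg u) (by linarith)
  have hpos : 0 < u + √(u ^ 2 + c) := by linarith [neg_abs_le u]
  have hsq : √(u ^ 2 + c) ^ 2 = u ^ 2 + c := sq_sqrt (by positivity)
  refine ⟨u + √(u ^ 2 + c), hpos, ?_⟩
  field_simp
  linear_combination hsq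

lemma strictMonoOn_half_sub_div {c : ℝ} (hc : 0 ≤ c) :
    StrictMonoOn (fun t ↦ (t - c / t) / 2) (Ioi 0) := fun x hx y _ hxy ↦ by
  have : c / y ≤ c / x := div_le_div_of_nonneg_left hc hx hxy.le
  dsimp only; linarith

lemma hasDerivAt_half_sub_div (c : ℝ) {t : ℝ} (ht : t ≠ 0) :
    HasDerivAt (fun t ↦ (t - c / t) / 2) ((1 + c / t ^ 2) / 2) t := by
  have h := ((hasDerivAt_id' t).sub ((hasDerivAt_inv ht).const_mul c)).div_const 2
  simp only [← div_eq_mul_inv, mul_neg, sub_neg_eq_add] at h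
  exact h

lemma landen_identity (a b : ℝ) {t : ℝ} (ht : t ≠ 0) :
    (((t - a * b / t) / 2) ^ 2 + ((a + b) / 2) ^ 2) * (((t - a * b / t) / 2) ^ 2 + a * b) =
      ((t ^ 2 + a ^ 2) * (t ^ 2 + b ^ 2)) * ((t ^ 2 + a * b) / (4 * t ^ 2)) ^ 2 := by
  field_simp
  ring

lemma agmIntegralIoi_half_add_sqrt_mul {a b : ℝ} (ha : 0 < a) (hb : 0 < b) :
    agmIntegralIoi ((a + b) / 2) √(a * b) = agmIntegralIoi a b := by
  have hab : 0 < a * b := mul_pos ha hb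
  set g : ℝ → ℝ := fun u ↦ (√((u ^ 2 + ((a + b) / 2) ^ 2) * (u ^ 2 + √(a * b) ^ 2)))⁻¹
  have hcov := integral_image_eq_integral_abs_deriv_smul measurableSet_Ioi
    (fun t ht ↦ (hasDerivAt_half_sub_div (a * b) (ne_of_gt ht)).hasDerivWithinAt)
    (strictMonoOn_half_sub_div hab.le).injOn g
  rw [image_half_sub_div_Ioi hab, setIntegral_univ] at hcov
  have heven : ∫ u, g u = 2 * agmIntegralIoi ((a + b) / 2) √(a * b) := by
    simp only [← integral_comp_abs (f := g), g, sq_abs, agmIntegralIoi]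
  have hpt : ∀ t ∈ Ioi (0 : ℝ), |(1 + a * b / t ^ 2) / 2| • g ((t - a * b / t) / 2) =
      2 * (√((t ^ 2 + a ^ 2) * (t ^ 2 + b ^ 2)))⁻¹ := fun t (ht : 0 < t) ↦ by
    have hq : 0 < (t ^ 2 + a * b) / (4 * t ^ 2) := by positivity
    have hderiv : (1 + a * b / t ^ 2) / 2 = 2 * ((t ^ 2 + a * b) / (4 * t ^ 2)) := by
      field_simp; ring
    simp only [g]
    rw [sq_sqrt hab.le, landen_identity a b ht.ne', sqrt_mul (by positivity), sqrt_sq hq.le,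
      smul_eq_mul, hderiv, abs_of_pos (mul_pos two_pos hq)]
    field_simp
  rw [heven, setIntegral_congr_fun measurableSet_Ioi hpt, integral_const_mul] at hcov
  exact mul_left_cancel₀ two_ne_zero hcov

lemma agmIntegral_half_add_sqrt_mul {a b : ℝ} (ha : 0 < a) (hb : 0 < b) :
    agmIntegral ((a + b) / 2) √(a * b) = agmIntegral a b := by
  rw [agmIntegral_eq_agmIntegralIoi _ (sqrt_pos.2 (mul_pos ha hb)),
    agmIntegral_eq_agmIntegralIoi _ hb, agmIntegralIoi_half_add_sqrt_mul ha hb]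

section Iteration

variable {A B : ℕ → ℝ}

lemma agm_iteration_pos (hA : ∀ n, A (n + 1) = (A n + B n) / 2)
    (hB : ∀ n, B (n + 1) = √(A n * B n)) (hA0 : 0 < A 0) (hB0 : 0 < B 0) (n : ℕ) :
    0 < A n ∧ 0 < B n := by
  induction n with
  | zero => exact ⟨hA0, hB0⟩
  | succ n ih =>
    rw [hA, hB]
    exact ⟨by linarith [ih.1, ih.2], Real.sqrt_pos.2 (mul_pos ih.1 ih.2)⟩

lemma agm_iteration_eq_agmSequences (hA : ∀ n, A (n + 1) = (A n + B n) / 2)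
    (hB : ∀ n, B (n + 1) = √(A n * B n)) (hA0 : 0 ≤ A 0) (hB0 : 0 ≤ B 0) (n : ℕ) :
    B (n + 1) = (NNReal.agmSequences (A 0).toNNReal (B 0).toNNReal n).1 ∧
      A (n + 1) = (NNReal.agmSequences (A 0).toNNReal (B 0).toNNReal n).2 := by
  induction n with
  | zero => simp [hA, hB, hA0, hB0]
  | succ n ih =>
    rw [NNReal.agmSequences_succ', hA, hB, ih.1, ih.2]
    simp [mul_comm, add_comm]

lemma tendsto_agm_iteration (hA : ∀ n, A (n + 1) = (A n + B n) / 2)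
    (hB : ∀ n, B (n + 1) = √(A n * B n)) (hA0 : 0 ≤ A 0) (hB0 : 0 ≤ B 0) :
    Tendsto A atTop (𝓝 (NNReal.agm (A 0).toNNReal (B 0).toNNReal)) ∧
      Tendsto B atTop (𝓝 (NNReal.agm (A 0).toNNReal (B 0).toNNReal)) := by
  have h := agm_iteration_eq_agmSequences hA hB hA0 hB0
  rw [← tendsto_add_atTop_iff_nat 1, ← tendsto_add_atTop_iff_nat 1 (f := B)]
  simp only [fun n ↦ (h n).1, fun n ↦ (h n).2]
  exact ⟨NNReal.tendsto_coe.2 NNReal.tendsto_agmSequences_snd_agm,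
    NNReal.tendsto_coe.2 NNReal.tendsto_agmSequences_fst_agm⟩

lemma agmIntegral_agm_iteration (hA : ∀ n, A (n + 1) = (A n + B n) / 2)
    (hB : ∀ n, B (n + 1) = √(A n * B n)) (hA0 : 0 < A 0) (hB0 : 0 < B 0) (n : ℕ) :
    agmIntegral (A n) (B n) = agmIntegral (A 0) (B 0) := by
  induction n with
  | zero => rfl
  | succ n ih =>
    obtain ⟨hAn, hBn⟩ := agm_iteration_pos hA hB hA0 hB0 n
    rw [hA, hB, agmIntegral_half_add_sqrt_mul hAn hBn, ih]

end Iteration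

/-- The AGM iteration `a_{n+1} = (a_n+b_n)/2`, `b_{n+1} = √(a_n b_n)` started at positive
`a, b` converges (both sequences) to a common positive limit `M = AGM(a,b)`, and
`π/(2M) = G(a,b) = ∫₀^{π/2} dθ/√(a²cos²θ + b²sin²θ)`. -/
theorem agm_and_elliptic_integral (a b : ℝ) (ha : 0 < a) (hb : 0 < b)
    (A B : ℕ → ℝ) (hA0 : A 0 = a) (hB0 : B 0 = b)
    (hA : ∀ n, A (n + 1) = (A n + B n) / 2)
    (hB : ∀ n, B (n + 1) = Real.sqrt (A n * B n)) :
    ∃ M : ℝ, 0 < M ∧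
      Tendsto A atTop (nhds M) ∧ Tendsto B atTop (nhds M) ∧
      Real.pi / (2 * M)
        = ∫ θ in (0:ℝ)..(Real.pi / 2),
            1 / Real.sqrt (a ^ 2 * Real.cos θ ^ 2 + b ^ 2 * Real.sin θ ^ 2) := by
  subst hA0 hB0
  obtain ⟨hAlim, hBlim⟩ := tendsto_agm_iteration hA hB ha.le hb.le
  have hM : 0 < (NNReal.agm (A 0).toNNReal (B 0).toNNReal : ℝ) :=
    NNReal.agm_pos (toNNReal_pos.2 ha) (toNNReal_pos.2 hb)
  refine ⟨_, hM, hAlim, hBlim, tendsto_nhds_unique (tendsto_agmIntegral hAlim hBlim hM) ?_⟩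
  simp only [agmIntegral_agm_iteration hA hB ha hb]
  exact tendsto_const_nhds
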